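/- arXiv:2311.11528 — 2 statements merged into one kernel-verified Lean document; each statement's English description precedes it below -/
import Mathlib

section
/- Let F be a commutative ring, q ∈ F, and let V = ℕ →₀ F be the free F-module with basis (e_k)_{k∈ℕ}. Define F-linear maps Δ : V → V ⊗ V by Δ(e_k) = Σ_{m=0}^{k} [k m]_q e_{k-m} ⊗ e_m, ε : V → F by ε(e_k) = 1 if k = 0 and 0 otherwise, η : F → V by η(1) = e_0, μ : V ⊗ V → V by μ(e_k ⊗ e_l) = e_{k+l}, and S : V → V by S(e_k) = (−1)^k q^{k(k−1)/2} e_k. Then μ ∘ (S ⊗ id_V) ∘ Δ = η ∘ ε = μ ∘ (id_V ⊗ S) ∘ Δ as F-linear maps V → V. -/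
/-!
Statement 7: on the free module `V = ℕ →₀ F` with basis `(e_k)`, the maps
`Δ, ε, η, μ, S` of the rank-1 braided tensor algebra satisfy the antipode axiom
`μ ∘ (S ⊗ id) ∘ Δ = η ∘ ε = μ ∘ (id ⊗ S) ∘ Δ`.
-/

open scoped TensorProduct

/-- The Gaussian binomial coefficient `[k m]_q` evaluated at an element `q` of a ring,
defined by `[k 0]_q = 1`, `[0 (m+1)]_q = 0` and the q-Pascal recurrence
`[k+1, m+1]_q = [k m]_q + q^(m+1) * [k, m+1]_q`. -/
def qBinom {R : Type*} [Ring R] (q : R) : ℕ → ℕ → R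
  | _, 0 => 1
  | 0, _ + 1 => 0
  | k + 1, m + 1 => qBinom q k m + q ^ (m + 1) * qBinom q k (m + 1)

section Aux
variable {F : Type*} [CommRing F] (q : F)

lemma qBinom_zero_right (k : ℕ) : qBinom q k 0 = 1 := by cases k <;> rfl

lemma qBinom_succ_succ (k m : ℕ) :
    qBinom q (k+1) (m+1) = qBinom q k m + q ^ (m+1) * qBinom q k (m+1) := rfl

lemma qBinom_eq_zero : ∀ k m : ℕ, k < m → qBinom q k m = 0 := by
  intro k
  induction k with
  | zero => intro m hm; cases m with
    | zero => omega
    | succ n => rfl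
  | succ n ih =>
    intro m hm
    cases m with
    | zero => omega
    | succ m =>
      rw [qBinom_succ_succ, ih m (by omega), ih (m+1) (by omega)]
      ring

lemma qBinom_self : ∀ k : ℕ, qBinom q k k = 1 := by
  intro k
  induction k with
  | zero => rfl
  | succ n ih =>
    rw [qBinom_succ_succ, ih, qBinom_eq_zero q n (n+1) (by omega)]
    ring

/-- dual q-Pascal recurrence -/
lemma qBinom_succ_succ' : ∀ k m : ℕ,
    qBinom q (k+1) (m+1) = q ^ (k - m) * qBinom q k m + qBinom q k (m+1) := by
  intro k
  induction k with
  | zero =>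
    intro m
    cases m with
    | zero => simp [qBinom]
    | succ m => simp [qBinom, qBinom_eq_zero q 0 (m+1) (by omega)]
  | succ n ih =>
    intro m
    rcases lt_or_ge (n+1) m with h | h
    · rw [qBinom_eq_zero q (n+2) (m+1) (by omega), qBinom_eq_zero q (n+1) m (by omega),
        qBinom_eq_zero q (n+1) (m+1) (by omega)]
      ring
    · cases m with
      | zero =>
        rw [qBinom_succ_succ q (n+1) 0]
        nth_rewrite 1 [ih 0]
        rw [qBinom_succ_succ q n 0, qBinom_zero_right, qBinom_zero_right,
          show n + 1 - 0 = (n - 0) + 1 by omega, pow_succ]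
        ring
      | succ m =>
        rcases Nat.eq_or_lt_of_le h with h' | h'
        · obtain rfl : m = n := by omega
          rw [qBinom_self, qBinom_eq_zero q (m+1) (m+2) (by omega),
            show m + 1 - (m + 1) = 0 by omega, qBinom_self]
          ring
        · have hmn : m + 1 ≤ n := by omega
          rw [qBinom_succ_succ q (n+1) (m+1)]
          nth_rewrite 1 [ih m]
          nth_rewrite 1 [ih (m+1)]
          rw [qBinom_succ_succ q n m, qBinom_succ_succ q n (m+1),
            show n + 1 - (m+1) = n - m by omega,
            show n - m = (n - (m+1)) + 1 by omega]
          ring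

lemma qBinom_symm : ∀ k m : ℕ, m ≤ k → qBinom q k m = qBinom q k (k - m) := by
  intro k
  induction k with
  | zero => intro m hm; interval_cases m; rfl
  | succ n ih =>
    intro m hm
    cases m with
    | zero => simp [qBinom_zero_right, qBinom_self]
    | succ m =>
      rw [show n + 1 - (m+1) = n - m by omega]
      rcases Nat.eq_or_lt_of_le hm with h' | h'
      · rw [← h', qBinom_self, show n - m = 0 by omega, qBinom_zero_right]
      · have hmn : m + 1 ≤ n := by omega
        rw [show n - m = (n - (m+1)) + 1 by omega, qBinom_succ_succ,
          qBinom_succ_succ' q n (n - (m+1)),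
          show n - (n - (m+1)) = m + 1 by omega,
          ih m (by omega), ih (m+1) hmn,
          show n - (m+1) + 1 = n - m by omega]
        ring

/-- `c j = (-1)^j q^(j(j-1)/2)` -/
noncomputable def cc (j : ℕ) : F := (-1 : F) ^ j * q ^ (j * (j - 1) / 2)

lemma exp_eq (j : ℕ) : (j + 1) * j / 2 = j * (j - 1) / 2 + j := by
  have h1 : (j + 1) * j / 2 = (j + 1).choose 2 := by
    rw [Nat.choose_two_right]; simp
  have h2 : j * (j - 1) / 2 = j.choose 2 := (Nat.choose_two_right j).symm
  rw [h1, h2, Nat.choose_succ_succ, Nat.choose_one_right, Nat.add_comm]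

lemma cc_succ (j : ℕ) : cc q (j + 1) = -(q ^ j * cc q j) := by
  unfold cc
  have : (j + 1) * ((j + 1) - 1) / 2 = j * (j - 1) / 2 + j := by
    simpa using exp_eq j
  rw [this, pow_succ, pow_add]
  ring

lemma cc_zero : cc q 0 = 1 := by simp [cc]

lemma sumA (k : ℕ) :
    ∑ m ∈ Finset.range (k + 2), qBinom q (k + 1) m * cc q m = 0 := by
  have hterm : ∀ j ∈ Finset.range (k+1),
      qBinom q (k+1) (j+1) * cc q (j+1) =
        (fun m => q ^ m * qBinom q k m * cc q m) (j+1)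
          - (fun m => q ^ m * qBinom q k m * cc q m) j := by
    intro j _
    simp only []
    rw [qBinom_succ_succ, cc_succ, pow_succ]
    ring
  rw [Finset.sum_range_succ' _ (k+1), Finset.sum_congr rfl hterm,
    Finset.sum_range_sub (fun m => q ^ m * qBinom q k m * cc q m) (k+1)]
  simp [qBinom_eq_zero q k (k+1) (by omega), qBinom_zero_right, cc_zero]

lemma sumB (k : ℕ) :
    ∑ m ∈ Finset.range (k + 2), qBinom q (k + 1) m * cc q (k + 1 - m) = 0 := by
  have h : ∀ m ∈ Finset.range (k+2),
      qBinom q (k+1) m * cc q (k+1-m) = qBinom q (k+1) (k+1-m) * cc q (k+1-m) := by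
    intro m hm
    have hm' : m ≤ k + 1 := by have := Finset.mem_range.mp hm; omega
    rw [qBinom_symm q (k+1) m hm']
  rw [Finset.sum_congr rfl h, ← Finset.sum_range_reflect]
  have h2 : ∀ m ∈ Finset.range (k+2),
      qBinom q (k+1) (k+1-(k+2-1-m)) * cc q (k+1-(k+2-1-m))
      = qBinom q (k+1) m * cc q m := by
    intro m hm
    have hm' : m ≤ k + 1 := by have := Finset.mem_range.mp hm; omega
    rw [show k+1-(k+2-1-m) = m by omega]
  rw [Finset.sum_congr rfl h2, sumA]

end Aux

theorem rank_one_antipode_axiom {F : Type*} [CommRing F] (q : F)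
    (Δ : (ℕ →₀ F) →ₗ[F] (ℕ →₀ F) ⊗[F] (ℕ →₀ F))
    (hΔ : ∀ k : ℕ, Δ (Finsupp.single k 1) =
      ∑ m ∈ Finset.range (k + 1),
        qBinom q k m • (Finsupp.single (k - m) (1 : F) ⊗ₜ[F] Finsupp.single m (1 : F)))
    (ε : (ℕ →₀ F) →ₗ[F] F)
    (hε : ∀ k : ℕ, ε (Finsupp.single k 1) = if k = 0 then 1 else 0)
    (η : F →ₗ[F] (ℕ →₀ F))
    (hη : η 1 = Finsupp.single 0 1)
    (μ : (ℕ →₀ F) ⊗[F] (ℕ →₀ F) →ₗ[F] (ℕ →₀ F))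
    (hμ : ∀ k l : ℕ,
      μ (Finsupp.single k (1 : F) ⊗ₜ[F] Finsupp.single l (1 : F)) = Finsupp.single (k + l) 1)
    (S : (ℕ →₀ F) →ₗ[F] (ℕ →₀ F))
    (hS : ∀ k : ℕ, S (Finsupp.single k 1) =
      ((-1 : F) ^ k * q ^ (k * (k - 1) / 2)) • Finsupp.single k 1) :
    μ ∘ₗ TensorProduct.map S LinearMap.id ∘ₗ Δ = η ∘ₗ ε ∧
    η ∘ₗ ε = μ ∘ₗ TensorProduct.map LinearMap.id S ∘ₗ Δ := by
  have hS' : ∀ k : ℕ, S (Finsupp.single k 1) = cc q k • Finsupp.single k 1 := hS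
  have hηε : ∀ k : ℕ, η (ε (Finsupp.single k (1:F))) =
      if k = 0 then Finsupp.single 0 1 else 0 := by
    intro k
    rw [hε]
    split
    · rw [hη]
    · simp
  have key1 : ∀ k : ℕ, μ (TensorProduct.map S LinearMap.id (Δ (Finsupp.single k 1))) =
      (∑ m ∈ Finset.range (k+1), qBinom q k m * cc q (k-m)) • Finsupp.single k (1:F) := by
    intro k
    rw [hΔ, map_sum, map_sum, Finset.sum_smul]
    refine Finset.sum_congr rfl fun m hm => ?_
    have hm' : m ≤ k := by have := Finset.mem_range.mp hm; omega
    rw [map_smul, map_smul, TensorProduct.map_tmul, hS', LinearMap.id_apply,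
      ← TensorProduct.smul_tmul', map_smul, hμ, Nat.sub_add_cancel hm', smul_smul,
      mul_comm]
  have key2 : ∀ k : ℕ, μ (TensorProduct.map LinearMap.id S (Δ (Finsupp.single k 1))) =
      (∑ m ∈ Finset.range (k+1), qBinom q k m * cc q m) • Finsupp.single k (1:F) := by
    intro k
    rw [hΔ, map_sum, map_sum, Finset.sum_smul]
    refine Finset.sum_congr rfl fun m hm => ?_
    have hm' : m ≤ k := by have := Finset.mem_range.mp hm; omega
    rw [map_smul, map_smul, TensorProduct.map_tmul, hS', LinearMap.id_apply,
      TensorProduct.tmul_smul, map_smul, hμ, Nat.sub_add_cancel hm', smul_smul,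
      mul_comm]
  constructor
  · apply Finsupp.lhom_ext
    intro k b
    rw [show Finsupp.single k b = b • Finsupp.single k (1:F) by
      simp [Finsupp.smul_single], map_smul, map_smul]
    congr 1
    simp only [LinearMap.comp_apply]
    rw [key1, hηε]
    cases k with
    | zero => simp [qBinom_zero_right, cc_zero]
    | succ j =>
      rw [if_neg (by omega), show j + 1 + 1 = j + 2 from rfl]
      have := sumB q j
      rw [this, zero_smul]
  · symm
    apply Finsupp.lhom_ext
    intro k b
    rw [show Finsupp.single k b = b • Finsupp.single k (1:F) by
      simp [Finsupp.smul_single], map_smul, map_smul]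
    congr 1
    simp only [LinearMap.comp_apply]
    rw [key2, hηε]
    cases k with
    | zero => simp [qBinom_zero_right, cc_zero]
    | succ j =>
      rw [if_neg (by omega)]
      rw [sumA, zero_smul]
end

section
/- Let F be a field and let A be the quotient of the free (noncommutative, associative, unital) F-algebra on two generators x₁, x₂ by the two-sided ideal generated by x₁² and x₂². Then the images in A of the alternating words in x₁ and x₂ — that is, the products x_{i₁}·x_{i₂}·⋯·x_{i_n} (n ≥ 0, with the empty word equal to 1) such that consecutive indices differ, i_j ≠ i_{j+1} for all 1 ≤ j < n — form a basis of A as an F-vector space. -/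
/-!
Let `A` act on the vector space with basis the alternating words, `xᵢ` prepending `i` to a
word that does not start with `i` and killing the others. Both operators square to zero, so this
is an `A`-module, and acting on the empty word sends the image of each alternating word `w` to the
basis vector `w`: the images are linearly independent. They span because `xᵢ` times an
alternating word is again an alternating word or, by `xᵢ² = 0`, zero.
-/

/-- The relations `x₁² = 0` and `x₂² = 0` in the free algebra on two generators. -/
inductive SquareRel (F : Type*) [Field F] :
    FreeAlgebra F (Fin 2) → FreeAlgebra F (Fin 2) → Prop
  | sq₁ : SquareRel F (FreeAlgebra.ι F (0 : Fin 2) ^ 2) 0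
  | sq₂ : SquareRel F (FreeAlgebra.ι F (1 : Fin 2) ^ 2) 0

/-- The image in the quotient algebra of the word `w` in the generators `x₁, x₂`. -/
noncomputable def wordProd (F : Type*) [Field F] (w : List (Fin 2)) :
    RingQuot (SquareRel F) :=
  (w.map fun i => RingQuot.mkAlgHom F (SquareRel F) (FreeAlgebra.ι F i)).prod

abbrev AlternatingWord := {l : List (Fin 2) // l.IsChain (· ≠ ·)}

section
variable (F : Type*) [Field F]

noncomputable def generator (i : Fin 2) : RingQuot (SquareRel F) :=
  RingQuot.mkAlgHom F (SquareRel F) (FreeAlgebra.ι F i)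

lemma generator_mul_self (i : Fin 2) : generator F i * generator F i = 0 := by
  have hrel : SquareRel F (FreeAlgebra.ι F i ^ 2) 0 := by
    fin_cases i
    exacts [SquareRel.sq₁, SquareRel.sq₂]
  simpa [generator, pow_two] using RingQuot.mkAlgHom_rel F hrel

lemma wordProd_nil : wordProd F [] = 1 := rfl

lemma wordProd_cons (i : Fin 2) (w : List (Fin 2)) :
    wordProd F (i :: w) = generator F i * wordProd F w := by
  simp [wordProd, generator]

noncomputable def consOperator (i : Fin 2) : Module.End F (AlternatingWord →₀ F) :=
  Finsupp.linearCombination F fun w : AlternatingWord =>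
    if h : (i :: w.1).IsChain (· ≠ ·) then Finsupp.single ⟨i :: w.1, h⟩ 1 else 0

lemma consOperator_single_of_chain {i : Fin 2} {w : AlternatingWord}
    (h : (i :: w.1).IsChain (· ≠ ·)) :
    consOperator F i (Finsupp.single w 1) = Finsupp.single ⟨i :: w.1, h⟩ 1 := by
  simp [consOperator, h]

lemma consOperator_mul_self (i : Fin 2) : consOperator F i * consOperator F i = 0 := by
  refine Finsupp.basisSingleOne.ext fun w => ?_
  by_cases h : (i :: w.1).IsChain (· ≠ ·)
  · have hii : ¬(i :: i :: w.1).IsChain (· ≠ ·) := by simp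
    simp [consOperator, h, hii]
  · simp [consOperator, h]

noncomputable def wordRepresentation :
    RingQuot (SquareRel F) →ₐ[F] Module.End F (AlternatingWord →₀ F) :=
  RingQuot.liftAlgHom F ⟨FreeAlgebra.lift F (consOperator F), fun _ _ h => by
    cases h <;> simpa [pow_two] using consOperator_mul_self F _⟩

lemma wordRepresentation_generator (i : Fin 2) :
    wordRepresentation F (generator F i) = consOperator F i := by
  simp [wordRepresentation, generator]

lemma wordRepresentation_wordProd_single_nil {w : List (Fin 2)} (hw : w.IsChain (· ≠ ·)) :
    wordRepresentation F (wordProd F w) (Finsupp.single ⟨[], List.isChain_nil⟩ 1) =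
      Finsupp.single ⟨w, hw⟩ 1 := by
  induction w with
  | nil => simp [wordProd_nil]
  | cons i t ih =>
    rw [wordProd_cons, map_mul, Module.End.mul_apply, ih hw.tail,
      wordRepresentation_generator, consOperator_single_of_chain F hw]

lemma linearIndependent_wordProd :
    LinearIndependent F fun w : AlternatingWord => wordProd F w.val := by
  refine LinearIndependent.of_comp
    ((wordRepresentation F).toLinearMap.flip (Finsupp.single ⟨[], List.isChain_nil⟩ 1)) ?_
  convert Finsupp.linearIndependent_single_one F AlternatingWord with w
  exact wordRepresentation_wordProd_single_nil F w.2

def alternatingSpan : Submodule F (RingQuot (SquareRel F)) :=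
  Submodule.span F (Set.range fun w : AlternatingWord => wordProd F w.val)

lemma generator_mul_wordProd_mem_alternatingSpan (i : Fin 2) (w : AlternatingWord) :
    generator F i * wordProd F w.val ∈ alternatingSpan F := by
  by_cases h : (i :: w.1).IsChain (· ≠ ·)
  · rw [← wordProd_cons]
    exact Submodule.subset_span ⟨⟨i :: w.1, h⟩, rfl⟩
  · obtain ⟨_ | ⟨j, t⟩, hw⟩ := w
    · exact absurd (List.isChain_singleton i) h
    obtain rfl : i = j := by_contra fun hij => h (hw.cons_cons hij)
    rw [wordProd_cons, ← mul_assoc, generator_mul_self, zero_mul]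
    exact Submodule.zero_mem _

lemma generator_mul_mem_alternatingSpan (i : Fin 2) {s : RingQuot (SquareRel F)}
    (hs : s ∈ alternatingSpan F) : generator F i * s ∈ alternatingSpan F := by
  induction hs using Submodule.span_induction with
  | mem _ hx => obtain ⟨w, rfl⟩ := hx; exact generator_mul_wordProd_mem_alternatingSpan F i w
  | zero => simp
  | add _ _ _ _ hx hy => rw [mul_add]; exact add_mem hx hy
  | smul c _ _ hx => rw [mul_smul_comm]; exact Submodule.smul_mem _ c hx

lemma mul_mem_alternatingSpan (a : RingQuot (SquareRel F)) {s : RingQuot (SquareRel F)}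
    (hs : s ∈ alternatingSpan F) : a * s ∈ alternatingSpan F := by
  obtain ⟨b, rfl⟩ := RingQuot.mkAlgHom_surjective F (SquareRel F) a
  induction b using FreeAlgebra.induction generalizing s with
  | grade0 r => simpa [Algebra.smul_def] using Submodule.smul_mem _ r hs
  | grade1 i => exact generator_mul_mem_alternatingSpan F i hs
  | mul x y hx hy => rw [map_mul, mul_assoc]; exact hx (hy hs)
  | add x y hx hy => rw [map_add, add_mul]; exact add_mem (hx hs) (hy hs)

lemma alternatingSpan_eq_top : alternatingSpan F = ⊤ := by
  refine eq_top_iff.2 fun a _ => ?_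
  simpa [wordProd_nil] using
    mul_mem_alternatingSpan F a (Submodule.subset_span ⟨⟨[], List.isChain_nil⟩, rfl⟩)

end

theorem alternating_words_basis (F : Type*) [Field F] :
    LinearIndependent F
      (fun w : {l : List (Fin 2) // l.Chain' (· ≠ ·)} => wordProd F w.val) ∧
    Submodule.span F
      (Set.range fun w : {l : List (Fin 2) // l.Chain' (· ≠ ·)} => wordProd F w.val) = ⊤ :=
  ⟨linearIndependent_wordProd F, alternatingSpan_eq_top F⟩
end
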